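/- Under the general setup, the operator T maps the cone K into itself: for every (u,v) ∈ K, the pair T(u,v) = (T₁(u,v), T₂(u,v)) satisfies, for each i = 1,2, T_i(u,v)(t) ≥ 0 for all t ∈ [0,1] and min_{t∈[a_i,b_i]} T_i(u,v)(t) ≥ c̃_i ‖T_i(u,v)‖∞. -/

import Mathlib

open MeasureTheory Set Filter

noncomputable section

/-- The sup norm `‖w‖∞ = sup {|w(t)| : t ∈ [0,1]}`. -/
def supN (w : ℝ → ℝ) : ℝ := sSup ((fun t => |w t|) '' Icc (0:ℝ) 1)

/-- The minimum `min {w(t) : t ∈ [a,b]}`. -/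
def minOnIcc (w : ℝ → ℝ) (a b : ℝ) : ℝ := sInf (w '' Icc a b)

/-- The general setup of Infante–Pietramala, "Multiple positive solutions of systems with
coupled nonlinear BCs".  Indices `i, j ∈ {1,2}` of the paper correspond to `0, 1 : Fin 2`. -/
structure Setup where
  f : Fin 2 → ℝ → ℝ → ℝ → ℝ
  k : Fin 2 → ℝ → ℝ → ℝ
  g : Fin 2 → ℝ → ℝ
  a : Fin 2 → ℝ
  b : Fin 2 → ℝ
  Φ : Fin 2 → ℝ → ℝ
  c : Fin 2 → ℝ
  B : Fin 2 → Fin 2 → Measure ℝ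
  C : Fin 2 → Fin 2 → Measure ℝ
  H : Fin 2 → Fin 2 → ℝ → ℝ
  L : Fin 2 → Fin 2 → ℝ → ℝ
  h1 : Fin 2 → Fin 2 → ℝ
  h2 : Fin 2 → Fin 2 → ℝ
  l2 : Fin 2 → Fin 2 → ℝ
  γ : Fin 2 → Fin 2 → ℝ → ℝ
  cγ : Fin 2 → Fin 2 → ℝ
  -- the nonlinearities fᵢ : [0,1] × [0,∞)² → [0,∞) satisfy Carathéodory conditions
  f_nonneg : ∀ i, ∀ t ∈ Icc (0:ℝ) 1, ∀ u, 0 ≤ u → ∀ v, 0 ≤ v → 0 ≤ f i t u v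
  f_meas : ∀ i u v, Measurable fun t => f i t u v
  f_cont : ∀ i, ∀ᵐ t ∂(volume.restrict (Icc (0:ℝ) 1)),
      ContinuousOn (fun p : ℝ × ℝ => f i t p.1 p.2) (Ici 0 ×ˢ Ici 0)
  f_bdd : ∀ i, ∀ r > (0:ℝ), ∃ φ : ℝ → ℝ, MemLp φ ⊤ (volume.restrict (Icc (0:ℝ) 1)) ∧
      ∀ᵐ t ∂(volume.restrict (Icc (0:ℝ) 1)), ∀ u ∈ Icc (0:ℝ) r, ∀ v ∈ Icc (0:ℝ) r,
        f i t u v ≤ φ t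
  -- the kernels
  k_nonneg : ∀ i, ∀ t ∈ Icc (0:ℝ) 1, ∀ s ∈ Icc (0:ℝ) 1, 0 ≤ k i t s
  k_meas : ∀ i, Measurable (Function.uncurry (k i))
  k_cont : ∀ i, ∀ τ ∈ Icc (0:ℝ) 1, ∀ᵐ s ∂(volume.restrict (Icc (0:ℝ) 1)),
      Tendsto (fun t => |k i t s - k i τ s|) (nhds τ) (nhds 0)
  -- the subintervals [aᵢ,bᵢ] ⊆ [0,1], the functions Φᵢ and the constants cᵢ ∈ (0,1]
  ab_mem : ∀ i, 0 ≤ a i ∧ a i ≤ b i ∧ b i ≤ 1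
  Φ_mem : ∀ i, MemLp (Φ i) ⊤ (volume.restrict (Icc (0:ℝ) 1))
  c_mem : ∀ i, c i ∈ Ioc (0:ℝ) 1
  k_le : ∀ i, ∀ t ∈ Icc (0:ℝ) 1, ∀ᵐ s ∂(volume.restrict (Icc (0:ℝ) 1)), k i t s ≤ Φ i s
  k_ge : ∀ i, ∀ t ∈ Icc (a i) (b i), ∀ᵐ s ∂(volume.restrict (Icc (0:ℝ) 1)),
      c i * Φ i s ≤ k i t s
  -- the weights gᵢ
  g_meas : ∀ i, Measurable (g i)
  g_nonneg : ∀ i, ∀ᵐ s ∂(volume.restrict (Icc (0:ℝ) 1)), 0 ≤ g i s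
  gΦ_int : ∀ i, IntegrableOn (fun s => g i s * Φ i s) (Icc (0:ℝ) 1)
  gΦ_pos : ∀ i, 0 < ∫ s in Icc (a i) (b i), Φ i s * g i s
  -- the Stieltjes measures defining the functionals β and δ
  B_fin : ∀ i j, IsFiniteMeasure (B i j)
  C_fin : ∀ i j, IsFiniteMeasure (C i j)
  B_supp : ∀ i j, B i j (Icc (0:ℝ) 1)ᶜ = 0
  C_supp : ∀ i j, C i j (Icc (0:ℝ) 1)ᶜ = 0
  -- the nonlinear boundary functions H, L with their linear bounds
  H_cont : ∀ i j, ContinuousOn (H i j) (Ici 0)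
  L_cont : ∀ i j, ContinuousOn (L i j) (Ici 0)
  H_nonneg : ∀ i j w, 0 ≤ w → 0 ≤ H i j w
  L_nonneg : ∀ i j w, 0 ≤ w → 0 ≤ L i j w
  h1_nonneg : ∀ i j, 0 ≤ h1 i j
  h2_nonneg : ∀ i j, 0 ≤ h2 i j
  l2_nonneg : ∀ i j, 0 ≤ l2 i j
  H_bound_lower : ∀ i j w, 0 ≤ w → h1 i j * w ≤ H i j w
  H_bound_upper : ∀ i j w, 0 ≤ w → H i j w ≤ h2 i j * w
  L_bound : ∀ i j w, 0 ≤ w → L i j w ≤ l2 i j * w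
  -- the functions γᵢⱼ
  γ_cont : ∀ i j, ContinuousOn (γ i j) (Icc (0:ℝ) 1)
  γ_nonneg : ∀ i j, ∀ t ∈ Icc (0:ℝ) 1, 0 ≤ γ i j t
  hβγ : ∀ i j, h2 i j * ∫ s, γ i j s ∂(B i j) < 1
  cγ_mem : ∀ i j, cγ i j ∈ Ioc (0:ℝ) 1
  γ_ge : ∀ i j, ∀ t ∈ Icc (a i) (b i), cγ i j * supN (γ i j) ≤ γ i j t
  -- positivity of the determinants Dᵢ
  D_pos : ∀ i,
      0 < (1 - h2 i 0 * ∫ s, γ i 0 s ∂(B i 0)) * (1 - h2 i 1 * ∫ s, γ i 1 s ∂(B i 1))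
        - h2 i 0 * h2 i 1 * (∫ s, γ i 1 s ∂(B i 0)) * (∫ s, γ i 0 s ∂(B i 1))

namespace Setup

variable (S : Setup)

/-- The functionals `β_{ij}[w] = ∫₀¹ w dB_{ij}`. -/
def β (i j : Fin 2) (w : ℝ → ℝ) : ℝ := ∫ s, w s ∂(S.B i j)

/-- The functionals `δ_{ij}[w] = ∫₀¹ w dC_{ij}`. -/
def δ (i j : Fin 2) (w : ℝ → ℝ) : ℝ := ∫ s, w s ∂(S.C i j)

/-- The Hammerstein integral operators `Fᵢ`. -/
def F (i : Fin 2) (u v : ℝ → ℝ) (t : ℝ) : ℝ :=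
  ∫ s in Icc (0:ℝ) 1, S.k i t s * S.g i s * S.f i s (u s) (v s)

/-- First component of the operator `T`. -/
def T1 (u v : ℝ → ℝ) (t : ℝ) : ℝ :=
  S.γ 0 0 t * (S.H 0 0 (S.β 0 0 u) + S.L 0 0 (S.δ 0 0 v))
    + S.γ 0 1 t * (S.H 0 1 (S.β 0 1 u) + S.L 0 1 (S.δ 0 1 v))
    + S.F 0 u v t

/-- Second component of the operator `T`. -/
def T2 (u v : ℝ → ℝ) (t : ℝ) : ℝ :=
  S.γ 1 0 t * (S.L 1 0 (S.δ 1 0 u) + S.H 1 0 (S.β 1 0 v))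
    + S.γ 1 1 t * (S.L 1 1 (S.δ 1 1 u) + S.H 1 1 (S.β 1 1 v))
    + S.F 1 u v t

/-- The constants `c̃ᵢ = min{cᵢ, c_{i1}, c_{i2}}`. -/
def ctilde (i : Fin 2) : ℝ := min (S.c i) (min (S.cγ i 0) (S.cγ i 1))

/-- The constant `c = min{c̃₁, c̃₂}`. -/
def cc : ℝ := min (S.ctilde 0) (S.ctilde 1)

/-- Membership of `(u,v)` in the cone `K = K̃₁ × K̃₂`. -/
def inK (u v : ℝ → ℝ) : Prop :=
  ContinuousOn u (Icc (0:ℝ) 1) ∧ ContinuousOn v (Icc (0:ℝ) 1) ∧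
  (∀ t ∈ Icc (0:ℝ) 1, 0 ≤ u t) ∧ (∀ t ∈ Icc (0:ℝ) 1, 0 ≤ v t) ∧
  S.ctilde 0 * supN u ≤ minOnIcc u (S.a 0) (S.b 0) ∧
  S.ctilde 1 * supN v ≤ minOnIcc v (S.a 1) (S.b 1)

/-- `𝒦_{ij}(s) = ∫₀¹ kᵢ(t,s) dB_{ij}(t)`. -/
def KK (i j : Fin 2) (s : ℝ) : ℝ := ∫ t, S.k i t s ∂(S.B i j)

/-- `Qᵢ = Σ_l β_{i1}[γ_{il}] l_{il2} δ_{il}[1]`. -/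
def Q (i : Fin 2) : ℝ := ∑ l, S.β i 0 (S.γ i l) * S.l2 i l * S.δ i l (fun _ => 1)

/-- `Sᵢ = Σ_l β_{i2}[γ_{il}] l_{il2} δ_{il}[1]`. -/
def Sq (i : Fin 2) : ℝ := ∑ l, S.β i 1 (S.γ i l) * S.l2 i l * S.δ i l (fun _ => 1)

/-- The determinant `Dᵢ`. -/
def D (i : Fin 2) : ℝ :=
  (1 - S.h2 i 0 * S.β i 0 (S.γ i 0)) * (1 - S.h2 i 1 * S.β i 1 (S.γ i 1))
    - S.h2 i 0 * S.h2 i 1 * S.β i 0 (S.γ i 1) * S.β i 1 (S.γ i 0)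

/-- The determinant `𝐷̲ᵢ` (with the lower constants `h_{ij1}`). -/
def Dl (i : Fin 2) : ℝ :=
  (1 - S.h1 i 0 * S.β i 0 (S.γ i 0)) * (1 - S.h1 i 1 * S.β i 1 (S.γ i 1))
    - S.h1 i 0 * S.h1 i 1 * S.β i 0 (S.γ i 1) * S.β i 1 (S.γ i 0)

def θ1 (i : Fin 2) : ℝ := (1 - S.h2 i 1 * S.β i 1 (S.γ i 1)) / S.D i
def θ2 (i : Fin 2) : ℝ := S.h2 i 1 * S.β i 0 (S.γ i 1) / S.D i
def θ3 (i : Fin 2) : ℝ := S.h2 i 0 * S.β i 1 (S.γ i 0) / S.D i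
def θ4 (i : Fin 2) : ℝ := (1 - S.h2 i 0 * S.β i 0 (S.γ i 0)) / S.D i

/-- `1/mᵢ = sup_{t ∈ [0,1]} ∫₀¹ kᵢ(t,s)gᵢ(s) ds`. -/
def mInv (i : Fin 2) : ℝ :=
  sSup ((fun t => ∫ s in Icc (0:ℝ) 1, S.k i t s * S.g i s) '' Icc (0:ℝ) 1)

/-- `1/Mᵢ = inf_{t ∈ [aᵢ,bᵢ]} ∫_{aᵢ}^{bᵢ} kᵢ(t,s)gᵢ(s) ds`. -/
def MInv (i : Fin 2) : ℝ :=
  sInf ((fun t => ∫ s in Icc (S.a i) (S.b i), S.k i t s * S.g i s) '' Icc (S.a i) (S.b i))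

/-- `fᵢ^{0,ρ} = sup{fᵢ(t,u,v)/ρ : t ∈ [0,1], u,v ∈ [0,ρ]}`. -/
def fSup (i : Fin 2) (ρ : ℝ) : ℝ :=
  sSup {x | ∃ t ∈ Icc (0:ℝ) 1, ∃ u ∈ Icc (0:ℝ) ρ, ∃ v ∈ Icc (0:ℝ) ρ, x = S.f i t u v / ρ}

/-- `f_{1,(ρ,ρ/c)}`. -/
def fInf1 (ρ : ℝ) : ℝ :=
  sInf {x | ∃ t ∈ Icc (S.a 0) (S.b 0), ∃ u ∈ Icc ρ (ρ / S.cc), ∃ v ∈ Icc (0:ℝ) (ρ / S.cc),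
    x = S.f 0 t u v / ρ}

/-- `f_{2,(ρ,ρ/c)}`. -/
def fInf2 (ρ : ℝ) : ℝ :=
  sInf {x | ∃ t ∈ Icc (S.a 1) (S.b 1), ∃ u ∈ Icc (0:ℝ) (ρ / S.cc), ∃ v ∈ Icc ρ (ρ / S.cc),
    x = S.f 1 t u v / ρ}

def fInf (i : Fin 2) (ρ : ℝ) : ℝ := if i = 0 then S.fInf1 ρ else S.fInf2 ρ

/-- `f*_{i,(0,ρ/c)}`. -/
def fInfStar (i : Fin 2) (ρ : ℝ) : ℝ :=
  sInf {x | ∃ t ∈ Icc (S.a i) (S.b i), ∃ u ∈ Icc (0:ℝ) (ρ / S.cc),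
    ∃ v ∈ Icc (0:ℝ) (ρ / S.cc), x = S.f i t u v / ρ}

/-- Condition `(I¹_ρ)`. -/
def CondI1 (ρ : ℝ) : Prop := ∀ i : Fin 2,
  S.fSup i ρ *
      ((supN (S.γ i 0) * S.h2 i 0 * S.θ1 i + supN (S.γ i 1) * S.h2 i 1 * S.θ3 i)
          * (∫ s in Icc (0:ℝ) 1, S.KK i 0 s * S.g i s)
        + (supN (S.γ i 0) * S.h2 i 0 * S.θ2 i + supN (S.γ i 1) * S.h2 i 1 * S.θ4 i)
          * (∫ s in Icc (0:ℝ) 1, S.KK i 1 s * S.g i s)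
        + S.mInv i)
    + supN (S.γ i 0) * S.h2 i 0 * (S.θ1 i * S.Q i + S.θ2 i * S.Sq i)
    + supN (S.γ i 1) * S.h2 i 1 * (S.θ3 i * S.Q i + S.θ4 i * S.Sq i)
    + (∑ j, supN (S.γ i j) * S.l2 i j * S.δ i j fun _ => 1) < 1

/-- The bracket appearing in conditions `(I⁰_ρ)` and `(I⁰_ρ)*`. -/
def Ψ (i : Fin 2) : ℝ :=
  (S.cγ i 0 * supN (S.γ i 0) * S.h1 i 0 / S.Dl i * (1 - S.h1 i 1 * S.β i 1 (S.γ i 1))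
      + S.cγ i 1 * supN (S.γ i 1) * S.h1 i 1 / S.Dl i * (S.h1 i 0 * S.β i 1 (S.γ i 0)))
    * (∫ s in Icc (S.a i) (S.b i), S.KK i 0 s * S.g i s)
  + (S.cγ i 0 * supN (S.γ i 0) * S.h1 i 0 / S.Dl i * (S.h1 i 1 * S.β i 0 (S.γ i 1))
      + S.cγ i 1 * supN (S.γ i 1) * S.h1 i 1 / S.Dl i * (1 - S.h1 i 0 * S.β i 0 (S.γ i 0)))
    * (∫ s in Icc (S.a i) (S.b i), S.KK i 1 s * S.g i s)
  + S.MInv i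

/-- Condition `(I⁰_ρ)`. -/
def CondI0 (ρ : ℝ) : Prop := ∀ i : Fin 2, 1 < S.fInf i ρ * S.Ψ i

/-- Condition `(I⁰_ρ)*`. -/
def CondI0Star (ρ : ℝ) : Prop := ∃ i : Fin 2, 1 < S.fInfStar i ρ * S.Ψ i

/-- `(u,v)` is a fixed point of `T` (as functions on `[0,1]`). -/
def IsFixedPt (u v : ℝ → ℝ) : Prop :=
  ∀ t ∈ Icc (0:ℝ) 1, S.T1 u v t = u t ∧ S.T2 u v t = v t

/-- `(u,v)` is a positive solution: a fixed point of `T` in `K` with `‖(u,v)‖ > 0`. -/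
def PosSol (u v : ℝ → ℝ) : Prop :=
  S.inK u v ∧ S.IsFixedPt u v ∧ 0 < max (supN u) (supN v)

/-- Two pairs are distinct as elements of `C[0,1] × C[0,1]`. -/
def Distinct (u₁ v₁ u₂ v₂ : ℝ → ℝ) : Prop :=
  ∃ t ∈ Icc (0:ℝ) 1, u₁ t ≠ u₂ t ∨ v₁ t ≠ v₂ t

end Setup

/-!
Write `Tᵢ(u,v) = γᵢ₁ Aᵢ + γᵢ₂ Bᵢ + Fᵢ(u,v)` with `Aᵢ, Bᵢ ≥ 0`. With
`I = ∫₀¹ Φᵢ gᵢ fᵢ(·,u,v)`, the kernel bounds `cᵢ Φᵢ ≤ kᵢ(t,·) ≤ Φᵢ` give `Fᵢ(u,v) ≤ I` on `[0,1]`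
and `cᵢ I ≤ Fᵢ(u,v)` on `[aᵢ,bᵢ]`; together with `c_{ij} ‖γᵢⱼ‖∞ ≤ γᵢⱼ` on `[aᵢ,bᵢ]` this squeezes
`Tᵢ(u,v)` between `U = ‖γᵢ₁‖∞ Aᵢ + ‖γᵢ₂‖∞ Bᵢ + I` on `[0,1]` and `c̃ᵢ U` on `[aᵢ,bᵢ]`.
Both comparisons of integrals need `s ↦ fᵢ(s,u(s),v(s))` to be measurable and essentially bounded;
measurability holds because `fᵢ` is a Carathéodory function.
-/

open Topology

section Caratheodory

variable {α X : Type*} [MeasurableSpace α]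

theorem measurable_comp_simpleFunc {β : Type*} [MeasurableSpace β] {F : α → X → β}
    (hF : ∀ x, Measurable (F · x)) (p : SimpleFunc α X) :
    Measurable fun t => F t (p t) := by
  intro A hA
  have hpre : (fun t => F t (p t)) ⁻¹' A = ⋃ x ∈ p.range, p ⁻¹' {x} ∩ (F · x) ⁻¹' A := by
    ext t
    simp only [Set.mem_preimage, Set.mem_iUnion, Set.mem_inter_iff, Set.mem_singleton_iff,
      exists_prop]
    exact ⟨fun h => ⟨p t, p.mem_range_self t, rfl, h⟩, by rintro ⟨_, _, rfl, h⟩; exact h⟩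
  rw [hpre]
  exact Finset.measurableSet_biUnion _ fun x _ =>
    (p.measurableSet_preimage {x}).inter (hF x hA)

theorem aestronglyMeasurable_comp_of_caratheodory [PseudoEMetricSpace X] [MeasurableSpace X]
    [OpensMeasurableSpace X] {μ : Measure α} {F : α → X → ℝ} {s : Set X}
    [TopologicalSpace.SeparableSpace s] (hs : IsClosed s) (hF_meas : ∀ x, Measurable (F · x))
    (hF_cont : ∀ᵐ t ∂μ, ContinuousOn (F t) s) {w : α → X} (hw : AEMeasurable w μ)
    (hws : ∀ᵐ t ∂μ, w t ∈ s) : AEStronglyMeasurable (fun t => F t (w t)) μ := by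
  rcases s.eq_empty_or_nonempty with rfl | ⟨x₀, hx₀⟩
  · simp only [mem_empty_iff_false, eventually_false_iff_eq_bot, ae_eq_bot] at hws
    exact hws ▸ aestronglyMeasurable_zero_measure _
  -- approximate a measurable version of `w` by simple functions with values in `s`
  set p := SimpleFunc.approxOn _ hw.measurable_mk s x₀ hx₀
  refine aestronglyMeasurable_of_tendsto_ae atTop
    (fun n => (measurable_comp_simpleFunc hF_meas (p n)).aestronglyMeasurable) ?_
  filter_upwards [hw.ae_eq_mk, hF_cont, hws] with t hwt hcont hwts
  rw [hwt] at hwts ⊢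
  have hp_lim : Tendsto (fun n => p n t) atTop (𝓝[s] hw.mk w t) :=
    tendsto_nhdsWithin_iff.2 ⟨SimpleFunc.tendsto_approxOn _ hx₀ (hs.closure_eq.symm ▸ hwts),
      Eventually.of_forall fun n => SimpleFunc.approxOn_mem _ hx₀ n t⟩
  exact (hcont _ hwts).tendsto.comp hp_lim

end Caratheodory

theorem integral_nonneg_of_measure_compl_eq_zero {α : Type*} [MeasurableSpace α] {μ : Measure α}
    {s : Set α} (hμ : μ sᶜ = 0) {w : α → ℝ} (hw : ∀ t ∈ s, 0 ≤ w t) : 0 ≤ ∫ t, w t ∂μ :=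
  integral_nonneg_of_ae ((show ∀ᵐ t ∂μ, t ∈ s from mem_ae_iff.2 hμ).mono hw)

section SupNorm

variable {w : ℝ → ℝ}

theorem abs_le_supN (hw : ContinuousOn w (Icc 0 1)) {t : ℝ} (ht : t ∈ Icc (0:ℝ) 1) :
    |w t| ≤ supN w :=
  le_csSup (isCompact_Icc.image_of_continuousOn hw.abs).bddAbove ⟨t, ht, rfl⟩

theorem supN_le {U : ℝ} (h : ∀ t ∈ Icc (0:ℝ) 1, |w t| ≤ U) : supN w ≤ U :=
  csSup_le ((nonempty_Icc.2 zero_le_one).image _) (forall_mem_image.2 h)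

theorem le_minOnIcc {a b m : ℝ} (hab : a ≤ b) (h : ∀ t ∈ Icc a b, m ≤ w t) :
    m ≤ minOnIcc w a b :=
  le_csInf ((nonempty_Icc.2 hab).image w) (forall_mem_image.2 h)

theorem mul_supN_le_minOnIcc {a b c U : ℝ} (hc : 0 ≤ c) (hab : a ≤ b)
    (hw0 : ∀ t ∈ Icc (0:ℝ) 1, 0 ≤ w t) (hwU : ∀ t ∈ Icc (0:ℝ) 1, w t ≤ U)
    (hUw : ∀ t ∈ Icc a b, c * U ≤ w t) : c * supN w ≤ minOnIcc w a b :=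
  calc c * supN w ≤ c * U := by
        gcongr
        exact supN_le fun t ht => (abs_of_nonneg (hw0 t ht)).trans_le (hwU t ht)
    _ ≤ minOnIcc w a b := le_minOnIcc hab hUw

end SupNorm

namespace Setup

variable (S : Setup) (i : Fin 2) {u v : ℝ → ℝ}

/-- The cone `K̃ᵢ`, without the continuity requirement. -/
def Ktilde : Set (ℝ → ℝ) :=
  {w | (∀ t ∈ Icc (0:ℝ) 1, 0 ≤ w t) ∧ S.ctilde i * supN w ≤ minOnIcc w (S.a i) (S.b i)}

theorem ctilde_nonneg : 0 ≤ S.ctilde i :=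
  (lt_min (S.c_mem i).1 (lt_min (S.cγ_mem i 0).1 (S.cγ_mem i 1).1)).le

theorem ctilde_le_c : S.ctilde i ≤ S.c i := min_le_left _ _

theorem ctilde_le_cγ (j : Fin 2) : S.ctilde i ≤ S.cγ i j := by
  fin_cases j
  · exact (min_le_right _ _).trans (min_le_left _ _)
  · exact (min_le_right _ _).trans (min_le_right _ _)

theorem β_nonneg (j : Fin 2) (hu0 : ∀ t ∈ Icc (0:ℝ) 1, 0 ≤ u t) : 0 ≤ S.β i j u :=
  integral_nonneg_of_measure_compl_eq_zero (S.B_supp i j) hu0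

theorem δ_nonneg (j : Fin 2) (hu0 : ∀ t ∈ Icc (0:ℝ) 1, 0 ≤ u t) : 0 ≤ S.δ i j u :=
  integral_nonneg_of_measure_compl_eq_zero (S.C_supp i j) hu0

theorem Φ_nonneg_ae : ∀ᵐ s ∂(volume.restrict (Icc (0:ℝ) 1)), 0 ≤ S.Φ i s := by
  have h0 : (0:ℝ) ∈ Icc (0:ℝ) 1 := left_mem_Icc.2 zero_le_one
  filter_upwards [S.k_le i 0 h0, ae_restrict_mem measurableSet_Icc] with s hkΦ hs
  exact (S.k_nonneg i 0 h0 s hs).trans hkΦ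

theorem aestronglyMeasurable_f_comp (hu : ContinuousOn u (Icc 0 1))
    (hv : ContinuousOn v (Icc 0 1)) (hu0 : ∀ t ∈ Icc (0:ℝ) 1, 0 ≤ u t)
    (hv0 : ∀ t ∈ Icc (0:ℝ) 1, 0 ≤ v t) :
    AEStronglyMeasurable (fun s => S.f i s (u s) (v s)) (volume.restrict (Icc (0:ℝ) 1)) :=
  aestronglyMeasurable_comp_of_caratheodory (F := fun t p => S.f i t p.1 p.2)
    (isClosed_Ici.prod isClosed_Ici) (fun p => S.f_meas i p.1 p.2) (S.f_cont i)
    ((hu.aemeasurable measurableSet_Icc).prodMk (hv.aemeasurable measurableSet_Icc))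
    ((ae_restrict_mem measurableSet_Icc).mono fun s hs => mk_mem_prod (hu0 s hs) (hv0 s hs))

-- `f_bdd` applies because `u` and `v` are bounded on `[0,1]`.
theorem memLp_top_f_comp (hu : ContinuousOn u (Icc 0 1))
    (hv : ContinuousOn v (Icc 0 1)) (hu0 : ∀ t ∈ Icc (0:ℝ) 1, 0 ≤ u t)
    (hv0 : ∀ t ∈ Icc (0:ℝ) 1, 0 ≤ v t) :
    MemLp (fun s => S.f i s (u s) (v s)) ⊤ (volume.restrict (Icc (0:ℝ) 1)) := by
  obtain ⟨Cu, hCu⟩ := isCompact_Icc.exists_bound_of_continuousOn hu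
  obtain ⟨Cv, hCv⟩ := isCompact_Icc.exists_bound_of_continuousOn hv
  obtain ⟨φ, hφ, hfφ⟩ := S.f_bdd i (max 1 (max Cu Cv)) (lt_max_of_lt_left one_pos)
  obtain ⟨C, hφC⟩ := eLpNormEssSup_lt_top_iff_isBoundedUnder.1
    (eLpNorm_exponent_top (f := φ) ▸ hφ.eLpNorm_lt_top)
  refine memLp_top_of_bound (S.aestronglyMeasurable_f_comp i hu hv hu0 hv0) C ?_
  filter_upwards [ae_restrict_mem measurableSet_Icc, hfφ, hφC] with s hs hfφs hφCs
  have hf0 := S.f_nonneg i s hs (u s) (hu0 s hs) (v s) (hv0 s hs)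
  have hus : u s ∈ Icc (0:ℝ) (max 1 (max Cu Cv)) :=
    ⟨hu0 s hs, (le_abs_self _).trans ((hCu s hs).trans (by simp))⟩
  have hvs : v s ∈ Icc (0:ℝ) (max 1 (max Cu Cv)) :=
    ⟨hv0 s hs, (le_abs_self _).trans ((hCv s hs).trans (by simp))⟩
  rw [Real.norm_of_nonneg hf0]
  exact (hfφs _ hus _ hvs).trans ((le_abs_self _).trans (by exact_mod_cast hφCs))

theorem integrable_g_mul_Φ_mul_f_comp (hu : ContinuousOn u (Icc 0 1))
    (hv : ContinuousOn v (Icc 0 1)) (hu0 : ∀ t ∈ Icc (0:ℝ) 1, 0 ≤ u t)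
    (hv0 : ∀ t ∈ Icc (0:ℝ) 1, 0 ≤ v t) :
    Integrable (fun s => S.g i s * S.Φ i s * S.f i s (u s) (v s))
      (volume.restrict (Icc (0:ℝ) 1)) :=
  (S.gΦ_int i).mul_of_top_left (S.memLp_top_f_comp i hu hv hu0 hv0)

theorem integrable_k_mul_g_mul_f_comp (hu : ContinuousOn u (Icc 0 1))
    (hv : ContinuousOn v (Icc 0 1)) (hu0 : ∀ t ∈ Icc (0:ℝ) 1, 0 ≤ u t)
    (hv0 : ∀ t ∈ Icc (0:ℝ) 1, 0 ≤ v t) {t : ℝ} (ht : t ∈ Icc (0:ℝ) 1) :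
    Integrable (fun s => S.k i t s * S.g i s * S.f i s (u s) (v s))
      (volume.restrict (Icc (0:ℝ) 1)) := by
  refine (S.integrable_g_mul_Φ_mul_f_comp i hu hv hu0 hv0).mono'
    ((((S.k_meas i).comp measurable_prodMk_left).aestronglyMeasurable.mul
      (S.g_meas i).aestronglyMeasurable).mul (S.aestronglyMeasurable_f_comp i hu hv hu0 hv0)) ?_
  filter_upwards [ae_restrict_mem measurableSet_Icc, S.k_le i t ht, S.g_nonneg i]
    with s hs hkΦ hg
  have hf0 := S.f_nonneg i s hs (u s) (hu0 s hs) (v s) (hv0 s hs)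
  rw [Real.norm_of_nonneg (by have := S.k_nonneg i t ht s hs; positivity)]
  calc S.k i t s * S.g i s * S.f i s (u s) (v s)
      ≤ S.Φ i s * S.g i s * S.f i s (u s) (v s) := by gcongr
    _ = S.g i s * S.Φ i s * S.f i s (u s) (v s) := by ring

theorem F_nonneg (hu0 : ∀ t ∈ Icc (0:ℝ) 1, 0 ≤ u t) (hv0 : ∀ t ∈ Icc (0:ℝ) 1, 0 ≤ v t)
    {t : ℝ} (ht : t ∈ Icc (0:ℝ) 1) : 0 ≤ S.F i u v t := by
  refine integral_nonneg_of_ae ?_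
  filter_upwards [ae_restrict_mem measurableSet_Icc, S.g_nonneg i] with s hs hg
  have := S.k_nonneg i t ht s hs
  have := S.f_nonneg i s hs (u s) (hu0 s hs) (v s) (hv0 s hs)
  positivity

theorem F_le_integral_g_mul_Φ (hu : ContinuousOn u (Icc 0 1))
    (hv : ContinuousOn v (Icc 0 1)) (hu0 : ∀ t ∈ Icc (0:ℝ) 1, 0 ≤ u t)
    (hv0 : ∀ t ∈ Icc (0:ℝ) 1, 0 ≤ v t) {t : ℝ} (ht : t ∈ Icc (0:ℝ) 1) :
    S.F i u v t ≤ ∫ s in Icc (0:ℝ) 1, S.g i s * S.Φ i s * S.f i s (u s) (v s) := by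
  refine integral_mono_of_nonneg ?_ (S.integrable_g_mul_Φ_mul_f_comp i hu hv hu0 hv0) ?_
  · filter_upwards [ae_restrict_mem measurableSet_Icc, S.g_nonneg i] with s hs hg
    have := S.k_nonneg i t ht s hs
    have := S.f_nonneg i s hs (u s) (hu0 s hs) (v s) (hv0 s hs)
    positivity
  · filter_upwards [ae_restrict_mem measurableSet_Icc, S.k_le i t ht, S.g_nonneg i]
      with s hs hkΦ hg
    have := S.f_nonneg i s hs (u s) (hu0 s hs) (v s) (hv0 s hs)
    calc S.k i t s * S.g i s * S.f i s (u s) (v s)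
        ≤ S.Φ i s * S.g i s * S.f i s (u s) (v s) := by gcongr
      _ = S.g i s * S.Φ i s * S.f i s (u s) (v s) := by ring

theorem c_mul_integral_g_mul_Φ_le_F (hu : ContinuousOn u (Icc 0 1))
    (hv : ContinuousOn v (Icc 0 1)) (hu0 : ∀ t ∈ Icc (0:ℝ) 1, 0 ≤ u t)
    (hv0 : ∀ t ∈ Icc (0:ℝ) 1, 0 ≤ v t) {t : ℝ} (ht : t ∈ Icc (S.a i) (S.b i)) :
    S.c i * ∫ s in Icc (0:ℝ) 1, S.g i s * S.Φ i s * S.f i s (u s) (v s) ≤ S.F i u v t := by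
  obtain ⟨ha0, -, hb1⟩ := S.ab_mem i
  rw [← integral_const_mul]
  refine integral_mono_of_nonneg ?_
    (S.integrable_k_mul_g_mul_f_comp i hu hv hu0 hv0 (Icc_subset_Icc ha0 hb1 ht)) ?_
  · filter_upwards [ae_restrict_mem measurableSet_Icc, S.g_nonneg i, S.Φ_nonneg_ae i]
      with s hs hg hΦ
    have := (S.c_mem i).1
    have := S.f_nonneg i s hs (u s) (hu0 s hs) (v s) (hv0 s hs)
    positivity
  · filter_upwards [ae_restrict_mem measurableSet_Icc, S.k_ge i t ht, S.g_nonneg i]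
      with s hs hkΦ hg
    have := S.f_nonneg i s hs (u s) (hu0 s hs) (v s) (hv0 s hs)
    calc S.c i * (S.g i s * S.Φ i s * S.f i s (u s) (v s))
        = S.c i * S.Φ i s * S.g i s * S.f i s (u s) (v s) := by ring
      _ ≤ S.k i t s * S.g i s * S.f i s (u s) (v s) := by gcongr

theorem γ_add_F_mem_Ktilde (hu : ContinuousOn u (Icc 0 1))
    (hv : ContinuousOn v (Icc 0 1)) (hu0 : ∀ t ∈ Icc (0:ℝ) 1, 0 ≤ u t)
    (hv0 : ∀ t ∈ Icc (0:ℝ) 1, 0 ≤ v t) {A B : ℝ} (hA : 0 ≤ A) (hB : 0 ≤ B) :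
    (fun t => S.γ i 0 t * A + S.γ i 1 t * B + S.F i u v t) ∈ S.Ktilde i := by
  obtain ⟨ha0, hab, hb1⟩ := S.ab_mem i
  set I := ∫ s in Icc (0:ℝ) 1, S.g i s * S.Φ i s * S.f i s (u s) (v s)
  have hγ_le (j : Fin 2) {t : ℝ} (ht : t ∈ Icc (0:ℝ) 1) : S.γ i j t ≤ supN (S.γ i j) :=
    (le_abs_self _).trans (abs_le_supN (S.γ_cont i j) ht)
  have hγ_ge (j : Fin 2) {t : ℝ} (ht : t ∈ Icc (S.a i) (S.b i)) :
      S.ctilde i * supN (S.γ i j) ≤ S.γ i j t := by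
    have hsup : 0 ≤ supN (S.γ i j) := (abs_nonneg _).trans (abs_le_supN (S.γ_cont i j)
      (left_mem_Icc.2 zero_le_one))
    exact (mul_le_mul_of_nonneg_right (S.ctilde_le_cγ i j) hsup).trans (S.γ_ge i j t ht)
  have hI : 0 ≤ I := (S.F_nonneg i hu0 hv0 (left_mem_Icc.2 zero_le_one)).trans
    (S.F_le_integral_g_mul_Φ i hu hv hu0 hv0 (left_mem_Icc.2 zero_le_one))
  have hw0 (t : ℝ) (ht : t ∈ Icc (0:ℝ) 1) : 0 ≤ S.γ i 0 t * A + S.γ i 1 t * B + S.F i u v t := by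
    have := S.γ_nonneg i 0 t ht
    have := S.γ_nonneg i 1 t ht
    have := S.F_nonneg i hu0 hv0 ht
    positivity
  refine ⟨hw0, mul_supN_le_minOnIcc (U := supN (S.γ i 0) * A + supN (S.γ i 1) * B + I)
    (S.ctilde_nonneg i) hab hw0 (fun t ht => ?_) (fun t ht => ?_)⟩
  · gcongr
    exacts [hγ_le 0 ht, hγ_le 1 ht, S.F_le_integral_g_mul_Φ i hu hv hu0 hv0 ht]
  · have hF : S.ctilde i * I ≤ S.F i u v t :=
      (mul_le_mul_of_nonneg_right (S.ctilde_le_c i) hI).trans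
        (S.c_mul_integral_g_mul_Φ_le_F i hu hv hu0 hv0 ht)
    calc S.ctilde i * (supN (S.γ i 0) * A + supN (S.γ i 1) * B + I)
        = S.ctilde i * supN (S.γ i 0) * A + S.ctilde i * supN (S.γ i 1) * B + S.ctilde i * I := by
          ring
      _ ≤ S.γ i 0 t * A + S.γ i 1 t * B + S.F i u v t := by
          gcongr
          exacts [hγ_ge 0 ht, hγ_ge 1 ht]

end Setup

/-- The operator `T` leaves the cone `K` invariant: each component of `T(u,v)` is
nonnegative on `[0,1]` and satisfies `min_{[aᵢ,bᵢ]} Tᵢ(u,v) ≥ c̃ᵢ ‖Tᵢ(u,v)‖∞`. -/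
theorem T_maps_cone_into_cone (S : Setup) (u v : ℝ → ℝ) (huv : S.inK u v) :
    (∀ t ∈ Icc (0:ℝ) 1, 0 ≤ S.T1 u v t) ∧
    (∀ t ∈ Icc (0:ℝ) 1, 0 ≤ S.T2 u v t) ∧
    S.ctilde 0 * supN (S.T1 u v) ≤ minOnIcc (S.T1 u v) (S.a 0) (S.b 0) ∧
    S.ctilde 1 * supN (S.T2 u v) ≤ minOnIcc (S.T2 u v) (S.a 1) (S.b 1) := by
  obtain ⟨hu, hv, hu0, hv0, -, -⟩ := huv
  have hT1 : S.T1 u v ∈ S.Ktilde 0 := S.γ_add_F_mem_Ktilde 0 hu hv hu0 hv0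
    (add_nonneg (S.H_nonneg 0 0 _ (S.β_nonneg 0 0 hu0)) (S.L_nonneg 0 0 _ (S.δ_nonneg 0 0 hv0)))
    (add_nonneg (S.H_nonneg 0 1 _ (S.β_nonneg 0 1 hu0)) (S.L_nonneg 0 1 _ (S.δ_nonneg 0 1 hv0)))
  have hT2 : S.T2 u v ∈ S.Ktilde 1 := S.γ_add_F_mem_Ktilde 1 hu hv hu0 hv0
    (add_nonneg (S.L_nonneg 1 0 _ (S.δ_nonneg 1 0 hu0)) (S.H_nonneg 1 0 _ (S.β_nonneg 1 0 hv0)))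
    (add_nonneg (S.L_nonneg 1 1 _ (S.δ_nonneg 1 1 hu0)) (S.H_nonneg 1 1 _ (S.β_nonneg 1 1 hv0)))
  exact ⟨hT1.1, hT2.1, hT1.2, hT2.2⟩
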